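/- arXiv:1808.09813 — 3 statements merged into one kernel-verified Lean document; each statement's English description precedes it below -/
import Mathlib

section
/- Let k ∈ ℂ with |k| > 1, δ₀ > 0, t > 1, and set δ = tδ₀/(|k| − 1). Let (c_n)_{n≥0} be a complex sequence with |c_{n+1} − k c_n| ≤ δ₀ for all n. If |c_0 − 1/k^m| ≥ δ for every integer m ≥ 1, then |c_n − 1/k^m| ≥ δ for every n ∈ ℕ and every integer m ≥ 1; that is, the whole sequence stays outside the union 𝒟 = ⋃_{m≥1} {w : |w − 1/k^m| < δ}. -/
/-!
Multiplying by `k` maps the disk of radius `δ` around `z / k ^ (m + 1)` onto the disk of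
radius `‖k‖ δ` around `z / k ^ m`, and an approximate orbit step moves `k w` by at most `δ₀`.
So a point at distance `≥ δ` from `z / k ^ (m + 1)` is followed by one at distance
`≥ ‖k‖ δ - δ₀ ≥ δ` from `z / k ^ m`, and the choice `δ = t δ₀ / (‖k‖ - 1)` is exactly what
makes `δ₀ + δ ≤ ‖k‖ δ`.
-/

section NormedField

variable {𝕜 : Type*} [NormedField 𝕜] {k z : 𝕜} {δ₀ δ : ℝ}

lemma le_norm_sub_div_pow_of_approx_mul (hk : k ≠ 0) (hrad : δ₀ + δ ≤ ‖k‖ * δ)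
    {x y : 𝕜} (hxy : ‖y - k * x‖ ≤ δ₀) {m : ℕ} (hx : δ ≤ ‖x - z / k ^ (m + 1)‖) :
    δ ≤ ‖y - z / k ^ m‖ := by
  have hscale : ‖k * x - z / k ^ m‖ = ‖k‖ * ‖x - z / k ^ (m + 1)‖ := by
    rw [← norm_mul]
    congr 1
    field_simp
    ring
  have hmove : ‖k * x - z / k ^ m‖ ≤ ‖y - k * x‖ + ‖y - z / k ^ m‖ := by
    simpa only [norm_sub_rev (k * x) y] using norm_sub_le_norm_sub_add_norm_sub (k * x) y _
  have := mul_le_mul_of_nonneg_left hx (norm_nonneg k)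
  linarith

lemma le_norm_sub_div_pow_of_approx_orbit (hk : k ≠ 0) (hrad : δ₀ + δ ≤ ‖k‖ * δ)
    {c : ℕ → 𝕜} (hc : ∀ n, ‖c (n + 1) - k * c n‖ ≤ δ₀)
    (h0 : ∀ m, 1 ≤ m → δ ≤ ‖c 0 - z / k ^ m‖) (n : ℕ) :
    ∀ m, 1 ≤ m → δ ≤ ‖c n - z / k ^ m‖ := by
  induction n with
  | zero => exact h0
  | succ n ih =>
    intro m _
    exact le_norm_sub_div_pow_of_approx_mul hk hrad (hc n) (ih (m + 1) (by omega))

end NormedField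

/-- If the initial point of an approximate orbit of the dilation
`w ↦ kw` (`|k| > 1`) avoids all disks of radius `δ = tδ₀/(|k| - 1)` around the
backward orbit `1/k^m` (`m ≥ 1`) of the point `1`, then the whole approximate
orbit avoids them. -/
theorem avoided_region_of_dilation
    (k : ℂ) (hk : 1 < ‖k‖)
    (δ₀ : ℝ) (hδ₀ : 0 < δ₀) (t : ℝ) (ht : 1 < t)
    (δ : ℝ) (hδ : δ = t * δ₀ / (‖k‖ - 1))
    (c : ℕ → ℂ) (hc : ∀ n, ‖c (n + 1) - k * c n‖ ≤ δ₀)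
    (h0 : ∀ m : ℕ, 1 ≤ m → δ ≤ ‖c 0 - 1 / k ^ m‖) :
    ∀ n : ℕ, ∀ m : ℕ, 1 ≤ m → δ ≤ ‖c n - 1 / k ^ m‖ := by
  have hk0 : k ≠ 0 := norm_pos_iff.mp (by linarith)
  have hrad : δ₀ + δ ≤ ‖k‖ * δ := by
    have hscaled : δ * (‖k‖ - 1) = t * δ₀ := by
      rw [hδ]
      field_simp [(by linarith : ‖k‖ - 1 ≠ 0)]
    nlinarith
  exact le_norm_sub_div_pow_of_approx_orbit hk0 hrad hc h0
end

section
/- Let k ∈ ℂ with |k| > 1 and δ₀ > 0, and let (c_n)_{n≥0} be a complex sequence with |c_{n+1} − k c_n| ≤ δ₀ for all n. Then for every n ∈ ℕ: (i) |k^n c_0 − c_n| ≤ ((|k|^n − 1)/(|k| − 1)) δ₀; and (ii) if moreover |c_0| ≥ |k|δ₀/(|k| − 1), then |c_n − c_0| ≥ (|k|^n − 1)(|c_0| − δ₀/(|k| − 1)) ≥ (|k|^n − 1) δ₀. -/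
/-!
Each step of an approximate orbit multiplies the accumulated error by `|k|` and adds at most
`δ₀`, so after `n` steps the distance to the true orbit `kⁿ c₀` is at most the geometric sum
`(1 + |k| + ⋯ + |k|ⁿ⁻¹) δ₀`. Since `kⁿ c₀ - c₀` has modulus at least `(|k|ⁿ - 1)|c₀|`, the
approximate orbit escapes from `c₀` at least as fast as the true one, up to that error.
-/

open Finset

section ApproximateOrbit

variable {𝕜 E : Type*} [NormedField 𝕜] [SeminormedAddCommGroup E] [NormedSpace 𝕜 E]

theorem norm_pow_smul_sub_le_geom_sum_mul {k : 𝕜} {δ : ℝ} {c : ℕ → E}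
    (hc : ∀ n, ‖c (n + 1) - k • c n‖ ≤ δ) (n : ℕ) :
    ‖k ^ n • c 0 - c n‖ ≤ (∑ i ∈ range n, ‖k‖ ^ i) * δ := by
  induction n with
  | zero => simp
  | succ n ih =>
    have hsplit : k ^ (n + 1) • c 0 - c (n + 1) =
        k • (k ^ n • c 0 - c n) - (c (n + 1) - k • c n) := by
      rw [smul_sub, smul_smul, ← pow_succ', sub_sub_sub_cancel_right]
    calc ‖k ^ (n + 1) • c 0 - c (n + 1)‖
        ≤ ‖k‖ * ‖k ^ n • c 0 - c n‖ + ‖c (n + 1) - k • c n‖ := by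
          rw [hsplit, ← norm_smul]
          exact norm_sub_le _ _
      _ ≤ ‖k‖ * ((∑ i ∈ range n, ‖k‖ ^ i) * δ) + δ := by
          gcongr
          exact hc n
      _ = (∑ i ∈ range (n + 1), ‖k‖ ^ i) * δ := by
          rw [geom_sum_succ]
          ring

theorem mul_norm_sub_norm_smul_sub_le (a : 𝕜) (x y : E) :
    (‖a‖ - 1) * ‖x‖ - ‖a • x - y‖ ≤ ‖y - x‖ := by
  have hscale : (‖a‖ - 1) * ‖x‖ ≤ ‖(a - 1) • x‖ := by
    rw [norm_smul]
    gcongr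
    simpa using norm_sub_norm_le a 1
  have hsplit : (a - 1) • x = (y - x) + (a • x - y) := by
    rw [sub_smul, one_smul]
    abel
  have htri := norm_add_le (y - x) (a • x - y)
  rw [← hsplit] at htri
  linarith

end ApproximateOrbit

theorem escaping_estimates_for_dilation_general
    (k : ℂ) (hk : 1 < ‖k‖)
    (δ₀ : ℝ)
    (c : ℕ → ℂ) (hc : ∀ n, ‖c (n + 1) - k * c n‖ ≤ δ₀) :
    ∀ n : ℕ,
      ‖k ^ n * c 0 - c n‖ ≤
        (‖k‖ ^ n - 1) / (‖k‖ - 1) * δ₀ ∧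
      (‖k‖ * δ₀ / (‖k‖ - 1) ≤ ‖c 0‖ →
        (‖k‖ ^ n - 1) *
            (‖c 0‖ - δ₀ / (‖k‖ - 1)) ≤
          ‖c n - c 0‖ ∧
        (‖k‖ ^ n - 1) * δ₀ ≤
          (‖k‖ ^ n - 1) *
            (‖c 0‖ - δ₀ / (‖k‖ - 1))) := by
  intro n
  have hk1 : 0 < ‖k‖ - 1 := sub_pos.mpr hk
  have hshadow : ‖k ^ n * c 0 - c n‖ ≤ (‖k‖ ^ n - 1) / (‖k‖ - 1) * δ₀ := by
    rw [← geom_sum_eq hk.ne']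
    exact norm_pow_smul_sub_le_geom_sum_mul (k := k) hc n
  refine ⟨hshadow, fun hc0 => ⟨?_, ?_⟩⟩
  · have hescape := mul_norm_sub_norm_smul_sub_le (k ^ n) (c 0) (c n)
    rw [norm_pow, smul_eq_mul] at hescape
    calc (‖k‖ ^ n - 1) * (‖c 0‖ - δ₀ / (‖k‖ - 1))
        = (‖k‖ ^ n - 1) * ‖c 0‖ - (‖k‖ ^ n - 1) / (‖k‖ - 1) * δ₀ := by ring
      _ ≤ ‖c n - c 0‖ := by linarith
  · have hgap : δ₀ ≤ ‖c 0‖ - δ₀ / (‖k‖ - 1) := by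
      have hsum : ‖k‖ * δ₀ / (‖k‖ - 1) = δ₀ + δ₀ / (‖k‖ - 1) := by
        field_simp
        ring
      linarith
    exact mul_le_mul_of_nonneg_left hgap (sub_nonneg.mpr (one_le_pow₀ hk.le))

/-- Escaping estimates for approximate orbits of the dilation
`w ↦ kw`, `|k| > 1`: (i) `|kⁿ c₀ - c_n| ≤ ((|k|ⁿ - 1)/(|k| - 1)) δ₀`; (ii) if
`|c₀| ≥ |k|δ₀/(|k| - 1)` then
`|c_n - c₀| ≥ (|k|ⁿ - 1)(|c₀| - δ₀/(|k| - 1)) ≥ (|k|ⁿ - 1)δ₀`. -/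
theorem escaping_estimates_for_dilation
    (k : ℂ) (hk : 1 < ‖k‖)
    (δ₀ : ℝ) (hδ₀ : 0 < δ₀)
    (c : ℕ → ℂ) (hc : ∀ n, ‖c (n + 1) - k * c n‖ ≤ δ₀) :
    ∀ n : ℕ,
      ‖k ^ n * c 0 - c n‖ ≤
        (‖k‖ ^ n - 1) / (‖k‖ - 1) * δ₀ ∧
      (‖k‖ * δ₀ / (‖k‖ - 1) ≤ ‖c 0‖ →
        (‖k‖ ^ n - 1) *
            (‖c 0‖ - δ₀ / (‖k‖ - 1)) ≤
          ‖c n - c 0‖ ∧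
        (‖k‖ ^ n - 1) * δ₀ ≤
          (‖k‖ ^ n - 1) *
            (‖c 0‖ - δ₀ / (‖k‖ - 1))) :=
  escaping_estimates_for_dilation_general k hk δ₀ c hc
end

section
/- Let α, β be distinct fixed points of the loxodromic Möbius map g with |cβ + d| < 1 < |cα + d|, let k = 1/(cβ + d)² and h(z) = (z − β)/(z − α). Let δ > 0 satisfy δ|k| < |k − 1|. Then for every z ∈ ℂ with |z + d/c| < (δ|k|²/(2|k − 1|²)) · |α − β|, one has z ≠ α and |h(z) − 1/k| < δ. (That is, the open disk of radius ε₀ = δ|k|²|α − β|/(2|k − 1|²) centered at −d/c is contained in the preimage under h of the disk {w : |w − 1/k| < δ}.) -/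
/-!
Since `α ≠ β` are both roots of `c z² + (d - a) z - b`, Vieta and `ad - bc = 1` give
`(cα + d)(cβ + d) = 1`. Writing `p = -d/c` for the pole, this makes `1/k = (β - p)/(α - p)`,
so `h z - 1/k = (α - β)(z - p) / ((z - α)(α - p))`, while `|k|/|k - 1| = |α - p|/|α - β|`.
In these terms the radius is `δ|α - p|²/(2|α - β|)`, which is below `|α - p|/2` by the
hypothesis on `δ`; hence `|z - α| > |α - p|/2` on the disk, and the bound on `h z - 1/k`
follows.
-/

theorem mul_add_mul_add_eq_one_of_fixed {K : Type*} [Field K] {a b c d α β : K}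
    (hdet : a * d - b * c = 1) (hαβ : α ≠ β)
    (hα : a * α + b = α * (c * α + d)) (hβ : a * β + b = β * (c * β + d)) :
    (c * α + d) * (c * β + d) = 1 := by
  have hsum : c * (α + β) + d - a = 0 := by
    apply mul_left_cancel₀ (sub_ne_zero.mpr hαβ)
    linear_combination hβ - hα
  linear_combination hdet + c * hα + (c * α + d) * hsum

theorem sq_eq_div_of_mul_eq_one {K : Type*} [Field K] {c d α β p : K} (hc : c ≠ 0)
    (hp : c * p + d = 0) (huv : (c * α + d) * (c * β + d) = 1) :
    (c * β + d) ^ 2 = (β - p) / (α - p) := by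
  have hαp : α - p ≠ 0 := fun h => by
    have : c * α + d = 0 := by linear_combination c * h + hp
    simp [this] at huv
  rw [eq_div_iff hαp]
  apply mul_left_cancel₀ hc
  linear_combination (c * β + d) * huv - ((c * β + d) ^ 2 - 1) * hp

theorem norm_sq_eq_of_pole {𝕜 : Type*} [NormedField 𝕜] {c d α p : 𝕜}
    (hp : c * p + d = 0) :
    ‖(c * α + d) ^ 2‖ = ‖c * α + d‖ * ‖c‖ * ‖α - p‖ := by
  rw [mul_assoc, ← norm_mul, ← norm_mul, sq]
  congr 2
  linear_combination hp

theorem norm_sq_sub_one_eq_of_mul_eq_one {𝕜 : Type*} [NormedField 𝕜] {c d α β : 𝕜}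
    (huv : (c * α + d) * (c * β + d) = 1) :
    ‖(c * α + d) ^ 2 - 1‖ = ‖c * α + d‖ * ‖c‖ * ‖α - β‖ := by
  rw [mul_assoc, ← norm_mul, ← norm_mul]
  congr 1
  linear_combination huv

theorem div_sub_div_eq_mul_div {K : Type*} [Field K] {α β p z : K}
    (hzα : z ≠ α) (hαp : α ≠ p) :
    (z - β) / (z - α) - (β - p) / (α - p) = (α - β) * (z - p) / ((z - α) * (α - p)) := by
  rw [div_sub_div _ _ (sub_ne_zero.mpr hzα) (sub_ne_zero.mpr hαp)]
  ring

theorem ne_and_norm_div_sub_div_lt {𝕜 : Type*} [NormedField 𝕜] {α β p z : 𝕜} {δ : ℝ}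
    (hδ : 0 < δ) (hδα : δ * ‖α - p‖ < ‖α - β‖)
    (hz : ‖z - p‖ < δ * ‖α - p‖ ^ 2 / (2 * ‖α - β‖)) :
    z ≠ α ∧ ‖(z - β) / (z - α) - (β - p) / (α - p)‖ < δ := by
  set ρ := ‖α - p‖
  set D := ‖α - β‖
  have hρ : 0 < ρ := norm_pos_iff.mpr fun h =>
    (norm_nonneg (z - p)).not_gt (by simpa [ρ, h] using hz)
  have hD : 0 < D := by nlinarith
  have hradius : δ * ρ ^ 2 / (2 * D) < ρ / 2 := by
    rw [div_lt_div_iff₀ (by positivity) two_pos]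
    nlinarith
  have hfar : ρ / 2 < ‖z - α‖ := by
    have : ρ ≤ ‖z - p‖ + ‖z - α‖ := by
      simpa [ρ] using norm_sub_le (z - p) (z - α)
    linarith
  have hzα : z ≠ α := sub_ne_zero.mp (norm_pos_iff.mp (by linarith))
  refine ⟨hzα, ?_⟩
  rw [div_sub_div_eq_mul_div hzα (sub_ne_zero.mp (norm_pos_iff.mp hρ)), norm_div, norm_mul,
    norm_mul, div_lt_iff₀ (mul_pos (by linarith) hρ)]
  calc D * ‖z - p‖ < D * (δ * ρ ^ 2 / (2 * D)) := mul_lt_mul_of_pos_left hz hD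
    _ = δ * ρ * (ρ / 2) := by field_simp
    _ < δ * ρ * ‖z - α‖ := mul_lt_mul_of_pos_left hfar (by positivity)
    _ = δ * (‖z - α‖ * ρ) := by ring

theorem disk_around_pole_in_preimage_general
    (a b c d : ℂ) (hdet : a * d - b * c = 1) (hc : c ≠ 0)
    (α β : ℂ) (hαβ : α ≠ β)
    (hfixα : (a * α + b) / (c * α + d) = α)
    (hfixβ : (a * β + b) / (c * β + d) = β)
    (hα : 1 < ‖c * α + d‖)
    (k : ℂ) (hk : k = 1 / (c * β + d) ^ 2)
    (h : ℂ → ℂ) (hh : ∀ z, h z = (z - β) / (z - α))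
    (δ : ℝ) (hδ : 0 < δ) (hδk : δ * ‖k‖ < ‖k - 1‖) :
    ∀ z : ℂ,
      ‖z + d / c‖ <
        δ * ‖k‖ ^ 2 / (2 * ‖k - 1‖ ^ 2) *
          ‖α - β‖ →
      z ≠ α ∧ ‖h z - 1 / k‖ < δ := by
  intro z hz
  have hu : c * α + d ≠ 0 := norm_pos_iff.mp (one_pos.trans hα)
  -- otherwise `k = 1 / 0 = 0` and the disk is empty
  have hv : c * β + d ≠ 0 := fun hv =>
    (norm_nonneg (z + d / c)).not_gt (by simpa [hk, hv] using hz)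
  have huv := mul_add_mul_add_eq_one_of_fixed hdet hαβ
    ((div_eq_iff hu).mp hfixα) ((div_eq_iff hv).mp hfixβ)
  have hp : c * -(d / c) + d = 0 := by
    rw [mul_neg, mul_div_cancel₀ _ hc, neg_add_cancel]
  have hk' : k = (c * α + d) ^ 2 := by
    rw [hk, one_div, ← inv_pow, ← eq_inv_of_mul_eq_one_left huv]
  obtain ⟨m, hm, hk_norm, hk_sub_one_norm⟩ :
      ∃ m : ℝ, 0 < m ∧ ‖k‖ = m * ‖α - -(d / c)‖ ∧
        ‖k - 1‖ = m * ‖α - β‖ :=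
    ⟨_, by positivity, hk' ▸ norm_sq_eq_of_pole hp,
      hk' ▸ norm_sq_sub_one_eq_of_mul_eq_one huv⟩
  rw [hk_norm, hk_sub_one_norm] at hδk hz
  have hradius : ‖z - -(d / c)‖ < δ * ‖α - -(d / c)‖ ^ 2 / (2 * ‖α - β‖) := by
    rw [sub_neg_eq_add]
    convert hz using 1
    field_simp [norm_ne_zero_iff.mpr (sub_ne_zero.mpr hαβ)]
  rw [hh, hk, one_div_one_div, sq_eq_div_of_mul_eq_one hc hp huv]
  exact ne_and_norm_div_sub_div_lt hδ (lt_of_mul_lt_mul_left (by linarith) hm.le) hradius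

/-- For `δ > 0` with `δ|k| < |k - 1|`, the open disk of radius
`ε₀ = δ|k|²|α - β|/(2|k - 1|²)` centered at the pole `-d/c` is contained in the
preimage under `h(z) = (z - β)/(z - α)` of the disk `{w : |w - 1/k| < δ}`. -/
theorem disk_around_pole_in_preimage
    (a b c d : ℂ) (hdet : a * d - b * c = 1) (hc : c ≠ 0)
    (hlox : a + d ∉ (Complex.ofReal '' Set.Icc (-2 : ℝ) 2))
    (α β : ℂ) (hαβ : α ≠ β)
    (hfixα : (a * α + b) / (c * α + d) = α)
    (hfixβ : (a * β + b) / (c * β + d) = β)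
    (hα : 1 < ‖c * α + d‖) (hβ : ‖c * β + d‖ < 1)
    (k : ℂ) (hk : k = 1 / (c * β + d) ^ 2)
    (h : ℂ → ℂ) (hh : ∀ z, h z = (z - β) / (z - α))
    (δ : ℝ) (hδ : 0 < δ) (hδk : δ * ‖k‖ < ‖k - 1‖) :
    ∀ z : ℂ,
      ‖z + d / c‖ <
        δ * ‖k‖ ^ 2 / (2 * ‖k - 1‖ ^ 2) *
          ‖α - β‖ →
      z ≠ α ∧ ‖h z - 1 / k‖ < δ :=
  disk_around_pole_in_preimage_general a b c d hdet hc α β hαβ hfixα hfixβ hα k hk h hh δ hδ hδk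
end
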